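/- Let A, B ∈ ℝ^{p×p} be symmetric with B positive definite, let 1 ≤ q ≤ p, and let ℓ_q(A,B) be the q-th largest eigenvalue of B^{−1/2} A B^{−1/2}. Then the q largest eigenvalues of the matrix A − ℓ_q(A,B) · B are all nonnegative, i.e., λ_j(A − ℓ_q(A,B) B) ≥ 0 for j = 1, ..., q, where λ_1(M) ≥ ... ≥ λ_p(M) are the decreasingly sorted eigenvalues of a symmetric matrix M. -/

import Mathlib

/-!
Let `R = B^{1/2}` and `c = ℓ_q`. If `V` is orthogonal with `R⁻¹ A R⁻¹ = V diag(ℓ) Vᵀ`, then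
`C = R⁻¹ V` is invertible and `Cᵀ (A - c B) C = diag(ℓ - c)`, whose first `q` entries are `≥ 0`;
so the quadratic form of `A - c B` is `≥ 0` on a `q`-dimensional subspace. If `ν_j < 0` for some
`j < q`, the orthogonal diagonalization of `A - c B` makes that form negative definite on a
`(p - j)`-dimensional subspace. Two such subspaces meet only in `0`, so `q + (p - j) ≤ p`, which is
absurd (this is the counting behind Sylvester's law of inertia).
-/

open Matrix Finset

/-- The positive semidefinite square root of a positive semidefinite matrix, as
`Matrix.PosSemidef.sqrt` was defined in Mathlib (Dec 2024); it has since been removed. -/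
noncomputable def Matrix.PosSemidef.sqrt {n 𝕜 : Type*} [Fintype n] [DecidableEq n] [RCLike 𝕜]
    [PartialOrder 𝕜] [StarOrderedRing 𝕜] {A : Matrix n n 𝕜} (hA : A.PosSemidef) : Matrix n n 𝕜 :=
  (hA.1.eigenvectorUnitary : Matrix n n 𝕜) *
    diagonal (fun i => ((Real.sqrt (hA.1.eigenvalues i) : ℝ) : 𝕜)) *
    (star hA.1.eigenvectorUnitary : Matrix n n 𝕜)

/-- `μ` is the decreasingly sorted spectrum of the (symmetric) matrix `M`:
`μ 0 ≥ μ 1 ≥ ⋯ ≥ μ (p-1)` and `M = V diag(μ) Vᵀ` for some orthogonal `V`. -/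
def IsSortedSpectrum {p : ℕ} (M : Matrix (Fin p) (Fin p) ℝ) (μ : Fin p → ℝ) : Prop :=
  (∀ i j : Fin p, i ≤ j → μ j ≤ μ i) ∧
  ∃ V : Matrix (Fin p) (Fin p) ℝ, Vᵀ * V = 1 ∧ M = V * Matrix.diagonal μ * Vᵀ

namespace Matrix.PosSemidef

open scoped ComplexOrder

variable {n 𝕜 : Type*} [Fintype n] [DecidableEq n] [RCLike 𝕜] {A : Matrix n n 𝕜}

theorem isHermitian_sqrt (hA : A.PosSemidef) : hA.sqrt.IsHermitian := by
  simp only [IsHermitian, sqrt, conjTranspose_mul, diagonal_conjTranspose, star_eq_conjTranspose,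
    conjTranspose_conjTranspose, mul_assoc]
  congr 3
  funext i
  simp

theorem sqrt_mul_self (hA : A.PosSemidef) : hA.sqrt * hA.sqrt = A := by
  have hU : (star hA.1.eigenvectorUnitary : Matrix n n 𝕜) * hA.1.eigenvectorUnitary = 1 :=
    Unitary.coe_star_mul_self _
  conv_rhs => rw [hA.1.spectral_theorem, Unitary.conjStarAlgAut_apply]
  simp only [sqrt, mul_assoc]
  rw [← mul_assoc _ (hA.1.eigenvectorUnitary : Matrix n n 𝕜), hU, one_mul,
    ← mul_assoc (diagonal _), diagonal_mul_diagonal]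
  congr 3
  funext i
  rw [← RCLike.ofReal_mul, Real.mul_self_sqrt (hA.eigenvalues_nonneg i)]
  rfl

end Matrix.PosSemidef

namespace Matrix.PosDef

variable {n : Type*} [Fintype n] [DecidableEq n] {B : Matrix n n ℝ}

theorem isUnit_sqrt (hB : B.PosDef) : IsUnit hB.posSemidef.sqrt :=
  isUnit_of_mul_isUnit_left (hB.posSemidef.sqrt_mul_self ▸ hB.isUnit)

theorem transpose_inv_sqrt (hB : B.PosDef) :
    (hB.posSemidef.sqrt)⁻¹ᵀ = (hB.posSemidef.sqrt)⁻¹ := by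
  rw [transpose_nonsing_inv, ← conjTranspose_eq_transpose_of_trivial,
    hB.posSemidef.isHermitian_sqrt.eq]

theorem inv_sqrt_mul_mul_inv_sqrt (hB : B.PosDef) :
    (hB.posSemidef.sqrt)⁻¹ * B * (hB.posSemidef.sqrt)⁻¹ = 1 := by
  set R := hB.posSemidef.sqrt
  have hR := (isUnit_iff_isUnit_det R).1 hB.isUnit_sqrt
  calc R⁻¹ * B * R⁻¹ = R⁻¹ * R * (R * R⁻¹) := by
        rw [← hB.posSemidef.sqrt_mul_self]; simp only [R, mul_assoc]
    _ = 1 := by rw [nonsing_inv_mul _ hR, mul_nonsing_inv _ hR, one_mul]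

end Matrix.PosDef

theorem Submodule.finrank_add_finrank_le_of_nonneg_of_neg {K V β : Type*} [DivisionRing K]
    [AddCommGroup V] [Module K V] [FiniteDimensional K V] [Preorder β] [Zero β] (Q : V → β)
    {U N : Submodule K V} (hU : ∀ x ∈ U, 0 ≤ Q x) (hN : ∀ x ∈ N, x ≠ 0 → Q x < 0) :
    Module.finrank K U + Module.finrank K N ≤ Module.finrank K V := by
  have hUN : U ⊓ N = ⊥ :=
    (Submodule.eq_bot_iff _).2 fun x ⟨hxU, hxN⟩ => by
      by_contra hx
      exact (hU x hxU).not_gt (hN x hxN hx)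
  rw [← Submodule.finrank_sup_add_finrank_inf_eq, hUN, finrank_bot, add_zero]
  exact Submodule.finrank_le _

namespace Matrix

section CommRing

variable {n R : Type*} [Fintype n] [CommRing R]

theorem mulVec_dotProduct_mulVec_mulVec {k : Type*} [Fintype k] (P : Matrix n k R)
    (M : Matrix n n R) (z : k → R) :
    (P *ᵥ z) ⬝ᵥ (M *ᵥ (P *ᵥ z)) = z ⬝ᵥ ((Pᵀ * M * P) *ᵥ z) := by
  rw [← mulVec_mulVec, ← mulVec_mulVec, dotProduct_mulVec z, vecMul_transpose]

variable [DecidableEq n]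

theorem transpose_mul_conj_mul_of_transpose_mul_self_eq_one {V : Matrix n n R} (hV : Vᵀ * V = 1)
    (D : Matrix n n R) : Vᵀ * (V * D * Vᵀ) * V = D := by
  rw [← mul_assoc, ← mul_assoc, hV, one_mul, mul_assoc, hV, mul_one]

theorem transpose_mul_sub_smul_mul_eq_diagonal {A B K V : Matrix n n R} {ℓ : n → R}
    (hK : Kᵀ = K) (hKBK : K * B * K = 1) (hV : Vᵀ * V = 1)
    (hKAK : K * A * K = V * diagonal ℓ * Vᵀ) (c : R) :
    (K * V)ᵀ * (A - c • B) * (K * V) = diagonal fun i => ℓ i - c := by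
  calc (K * V)ᵀ * (A - c • B) * (K * V) = Vᵀ * (K * A * K) * V - c • (Vᵀ * (K * B * K) * V) := by
        rw [transpose_mul, hK]
        simp only [mul_sub, sub_mul, Matrix.mul_smul, smul_mul, mul_assoc]
    _ = diagonal ℓ - c • 1 := by
        rw [hKAK, hKBK, transpose_mul_conj_mul_of_transpose_mul_self_eq_one hV, mul_one, hV]
    _ = diagonal fun i => ℓ i - c := by
        rw [smul_one_eq_diagonal, diagonal_sub]

theorem dotProduct_diagonal_mulVec (d z : n → R) :
    z ⬝ᵥ (diagonal d *ᵥ z) = ∑ i, d i * z i ^ 2 := by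
  simp only [dotProduct, mulVec_diagonal]
  exact sum_congr rfl fun i _ => by ring

theorem submatrix_val_mulVec_dotProduct {M C : Matrix n n R} {d : n → R}
    (hC : Cᵀ * M * C = diagonal d) (s : Finset n) (z : s → R) :
    (C.submatrix id (↑) *ᵥ z) ⬝ᵥ (M *ᵥ (C.submatrix id (↑) *ᵥ z)) = ∑ i : s, d i * z i ^ 2 := by
  have hsub : (C.submatrix id ((↑) : s → n))ᵀ * M * C.submatrix id (↑) = diagonal (d ∘ (↑)) := by
    rw [transpose_submatrix, ← submatrix_id_id M, ← submatrix_mul _ _ _ _ _ Function.bijective_id,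
      ← submatrix_mul _ _ _ _ _ Function.bijective_id, hC,
      submatrix_diagonal _ _ Subtype.val_injective]
  rw [mulVec_dotProduct_mulVec_mulVec, hsub, dotProduct_diagonal_mulVec]
  rfl

end CommRing

section Field

variable {n 𝕜 : Type*} [Fintype n] [DecidableEq n] [Field 𝕜]

theorem finrank_range_mulVecLin_submatrix_val {C : Matrix n n 𝕜} (hC : IsUnit C) (s : Finset n) :
    Module.finrank 𝕜 (LinearMap.range (C.submatrix id ((↑) : s → n)).mulVecLin) = #s := by
  have hinj : Function.Injective (C.submatrix id ((↑) : s → n)).mulVecLin :=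
    mulVec_injective_iff.2 <| (linearIndependent_cols_of_isUnit hC).comp _ Subtype.val_injective
  rw [LinearMap.finrank_range_of_inj hinj, Module.finrank_fintype_fun_eq_card, Fintype.card_coe]

theorem card_add_card_le_of_transpose_mul_mul_eq_diagonal [LinearOrder 𝕜] [IsStrictOrderedRing 𝕜]
    {M C W : Matrix n n 𝕜} {d μ : n → 𝕜} (hC : IsUnit C) (hW : IsUnit W)
    (hCd : Cᵀ * M * C = diagonal d) (hWμ : Wᵀ * M * W = diagonal μ) {s t : Finset n}
    (hs : ∀ i ∈ s, 0 ≤ d i) (ht : ∀ i ∈ t, μ i < 0) : #s + #t ≤ Fintype.card n := by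
  rw [← finrank_range_mulVecLin_submatrix_val hC s, ← finrank_range_mulVecLin_submatrix_val hW t,
    ← Module.finrank_fintype_fun_eq_card 𝕜]
  refine Submodule.finrank_add_finrank_le_of_nonneg_of_neg (fun x => x ⬝ᵥ (M *ᵥ x)) ?_ ?_
  · rintro _ ⟨z, rfl⟩
    rw [mulVecLin_apply, submatrix_val_mulVec_dotProduct hCd]
    exact sum_nonneg fun i _ => mul_nonneg (hs i i.2) (sq_nonneg _)
  · rintro _ ⟨z, rfl⟩ hz
    obtain ⟨i₀, hi₀⟩ : ∃ i, z i ≠ 0 := by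
      by_contra! h
      exact hz (by rw [funext h]; exact map_zero _)
    rw [mulVecLin_apply, submatrix_val_mulVec_dotProduct hWμ, ← neg_pos, ← sum_neg_distrib]
    refine sum_pos' (fun i _ => ?_) ⟨i₀, mem_univ _, ?_⟩
    · exact neg_nonneg.2 (mul_nonpos_of_nonpos_of_nonneg (ht i i.2).le (sq_nonneg _))
    · exact neg_pos.2 (mul_neg_of_neg_of_pos (ht i₀ i₀.2) (by positivity))

end Field

end Matrix

theorem IsSortedSpectrum.exists_isUnit_transpose_mul_mul_eq_diagonal {p : ℕ}
    {M : Matrix (Fin p) (Fin p) ℝ} {μ : Fin p → ℝ} (h : IsSortedSpectrum M μ) :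
    ∃ W, IsUnit W ∧ Wᵀ * M * W = diagonal μ := by
  obtain ⟨-, W, hW, rfl⟩ := h
  exact ⟨W, IsUnit.of_mul_eq_one_right _ hW,
    transpose_mul_conj_mul_of_transpose_mul_self_eq_one hW _⟩

/-- for symmetric `A`, positive definite `B` and `1 ≤ q ≤ p`, with
`ℓ_q(A,B)` the `q`-th largest eigenvalue of `B^{-1/2} A B^{-1/2}`, the `q` largest
eigenvalues of `A − ℓ_q(A,B) · B` are all nonnegative. -/
theorem generalized_eigenvalue_shift_top_nonneg
    {p : ℕ} (q : ℕ) (hq1 : 1 ≤ q) (hqp : q ≤ p)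
    (A B : Matrix (Fin p) (Fin p) ℝ)
    (hB : B.PosDef)
    (ℓ : Fin p → ℝ)
    (hℓ : IsSortedSpectrum
      ((hB.posSemidef.sqrt)⁻¹ * A * (hB.posSemidef.sqrt)⁻¹) ℓ)
    (ν : Fin p → ℝ)
    (hν : IsSortedSpectrum (A - ℓ ⟨q - 1, by omega⟩ • B) ν) :
    ∀ j : Fin p, (j : ℕ) < q → 0 ≤ ν j := by
  intro j hj
  by_contra! hνj
  set k : Fin p := ⟨q - 1, by omega⟩
  obtain ⟨hℓ_anti, V, hV, hVℓ⟩ := hℓ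
  obtain ⟨W, hW, hWν⟩ := hν.exists_isUnit_transpose_mul_mul_eq_diagonal
  have hdiag := transpose_mul_sub_smul_mul_eq_diagonal hB.transpose_inv_sqrt
    hB.inv_sqrt_mul_mul_inv_sqrt hV hVℓ (ℓ k)
  have hCunit : IsUnit ((hB.posSemidef.sqrt)⁻¹ * V) :=
    (isUnit_nonsing_inv_iff.2 hB.isUnit_sqrt).mul (IsUnit.of_mul_eq_one_right _ hV)
  have hcard := card_add_card_le_of_transpose_mul_mul_eq_diagonal hCunit hW hdiag hWν
    (s := Iic k) (t := Ici j) (fun i hi => sub_nonneg.2 (hℓ_anti _ _ (mem_Iic.1 hi)))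
    (fun i hi => (hν.1 _ _ (mem_Ici.1 hi)).trans_lt hνj)
  rw [Fin.card_Iic, Fin.card_Ici, Fintype.card_fin, Fin.val_mk] at hcard
  omega
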